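/- arXiv:1012.5397 — 3 statements merged into one kernel-verified Lean document; each statement's English description precedes it below -/
import Mathlib

section
/- Let f : [a,b] → ℝ be differentiable on (a,b) with |f'(t)| ≤ M for all t ∈ [a,b]. Then for every x ∈ [a,b], |f(x) - (1/(b-a)) ∫_a^b f(t) dt| ≤ [1/4 + (x - (a+b)/2)²/(b-a)²] (b-a) M. -/
/-!
By the mean value theorem `f` is `M`-Lipschitz on `[a, b]`, so
`|f x - (1/(b-a)) ∫ f| ≤ (1/(b-a)) ∫ |f x - f t| dt ≤ (M/(b-a)) ∫ |x - t| dt`,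
and `∫_a^b |x - t| dt = ((x - a)² + (b - x)²) / 2 = (b - a)² / 4 + (x - (a + b) / 2)²`.
-/

open intervalIntegral Set

theorem abs_sub_le_mul_abs_sub_of_hasDerivAt_Ioo {f f' : ℝ → ℝ} {a b M : ℝ}
    (hf : ContinuousOn f (Icc a b)) (hderiv : ∀ t ∈ Ioo a b, HasDerivAt f (f' t) t)
    (hbound : ∀ t ∈ Ioo a b, |f' t| ≤ M) {s t : ℝ} (hs : s ∈ Icc a b)
    (ht : t ∈ Icc a b) :
    |f t - f s| ≤ M * |t - s| := by
  wlog hst : s < t generalizing s t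
  · rcases (not_lt.mp hst).eq_or_lt with rfl | hts
    · simp
    · rw [abs_sub_comm, abs_sub_comm t]
      exact this ht hs hts
  obtain ⟨c, hc, hslope⟩ := exists_hasDerivAt_eq_slope f f' hst
    (hf.mono (Icc_subset_Icc hs.1 ht.2))
    (fun y hy => hderiv y ⟨hs.1.trans_lt hy.1, hy.2.trans_le ht.2⟩)
  have hdiff : f t - f s = f' c * (t - s) := by
    rw [hslope, div_mul_cancel₀ _ (sub_ne_zero.mpr hst.ne')]
  rw [hdiff, abs_mul]
  exact mul_le_mul_of_nonneg_right
    (hbound c ⟨hs.1.trans_lt hc.1, hc.2.trans_le ht.2⟩) (abs_nonneg _)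

theorem integral_abs_sub_of_mem_Icc {a b x : ℝ} (hx : x ∈ Icc a b) :
    ∫ t in a..b, |x - t| = ((x - a) ^ 2 + (b - x) ^ 2) / 2 := by
  have hcont : Continuous fun t : ℝ => |x - t| := by fun_prop
  have hleft : ∫ t in a..x, |x - t| = ∫ t in a..x, (x - t) :=
    integral_congr fun t ht => abs_of_nonneg (by rw [uIcc_of_le hx.1] at ht; linarith [ht.2])
  have hright : ∫ t in x..b, |x - t| = ∫ t in x..b, (t - x) :=
    integral_congr fun t ht => by
      rw [abs_sub_comm]
      exact abs_of_nonneg (by rw [uIcc_of_le hx.2] at ht; linarith [ht.1])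
  rw [← integral_add_adjacent_intervals (hcont.intervalIntegrable a x)
    (hcont.intervalIntegrable x b), hleft, hright]
  simp only [integral_sub intervalIntegrable_const intervalIntegrable_id,
    integral_sub intervalIntegrable_id intervalIntegrable_const, intervalIntegral.integral_const,
    integral_id, smul_eq_mul]
  ring

theorem abs_sub_average_le_of_abs_sub_le {f : ℝ → ℝ} {a b x M : ℝ} (hab : a < b)
    (hf : IntervalIntegrable f MeasureTheory.volume a b)
    (hlip : ∀ t ∈ Icc a b, |f x - f t| ≤ M * |x - t|) :
    |f x - (1 / (b - a)) * ∫ t in a..b, f t| ≤ M / (b - a) * ∫ t in a..b, |x - t| := by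
  have hba : 0 < b - a := sub_pos.mpr hab
  have hdev : f x - (1 / (b - a)) * ∫ t in a..b, f t =
      (1 / (b - a)) * ∫ t in a..b, (f x - f t) := by
    rw [integral_sub intervalIntegrable_const hf, intervalIntegral.integral_const,
      smul_eq_mul]
    field_simp
  have hint : |∫ t in a..b, (f x - f t)| ≤ M * ∫ t in a..b, |x - t| :=
    calc |∫ t in a..b, (f x - f t)| ≤ ∫ t in a..b, |f x - f t| :=
          abs_integral_le_integral_abs hab.le
      _ ≤ ∫ t in a..b, M * |x - t| :=
          integral_mono_on hab.le (intervalIntegrable_const.sub hf).abs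
            (Continuous.intervalIntegrable (by fun_prop) a b) hlip
      _ = M * ∫ t in a..b, |x - t| := integral_const_mul M _
  calc |f x - (1 / (b - a)) * ∫ t in a..b, f t|
      = 1 / (b - a) * |∫ t in a..b, (f x - f t)| := by
        rw [hdev, abs_mul, abs_of_pos (one_div_pos.mpr hba)]
    _ ≤ 1 / (b - a) * (M * ∫ t in a..b, |x - t|) :=
        mul_le_mul_of_nonneg_left hint (one_div_pos.mpr hba).le
    _ = M / (b - a) * ∫ t in a..b, |x - t| := by ring

theorem ostrowski (a b M : ℝ) (hab : a < b) (f f' : ℝ → ℝ)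
    (hf : ContinuousOn f (Icc a b))
    (hderiv : ∀ t ∈ Ioo a b, HasDerivAt f (f' t) t)
    (hbound : ∀ t ∈ Icc a b, |f' t| ≤ M) :
    ∀ x ∈ Icc a b,
      |f x - (1 / (b - a)) * ∫ t in a..b, f t| ≤
        (1 / 4 + (x - (a + b) / 2) ^ 2 / (b - a) ^ 2) * (b - a) * M := by
  intro x hx
  have hlip : ∀ t ∈ Icc a b, |f x - f t| ≤ M * |x - t| := fun t ht =>
    abs_sub_le_mul_abs_sub_of_hasDerivAt_Ioo hf hderiv
      (fun s hs => hbound s (Ioo_subset_Icc_self hs)) ht hx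
  have hfi : IntervalIntegrable f MeasureTheory.volume a b :=
    (hf.mono (uIcc_of_le hab.le).subset).intervalIntegrable
  calc |f x - (1 / (b - a)) * ∫ t in a..b, f t|
      ≤ M / (b - a) * ∫ t in a..b, |x - t| := abs_sub_average_le_of_abs_sub_le hab hfi hlip
    _ = (1 / 4 + (x - (a + b) / 2) ^ 2 / (b - a) ^ 2) * (b - a) * M := by
      rw [integral_abs_sub_of_mem_Icc hx]
      field_simp [(sub_pos.mpr hab).ne']
      ring
end

section
/- Let f : [a,b] → ℝ be differentiable with γ ≤ f'(t) ≤ Γ for all t ∈ [a,b], and set S = (f(b)-f(a))/(b-a). Then for every x ∈ [a,b], |f(x) - (x - (a+b)/2)·S - (1/(b-a)) ∫_a^b f(t) dt| ≤ ((b-a)/2)(S - γ). -/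
open intervalIntegral Set MeasureTheory

/-! The deviation on the left-hand side does not change when a linear function `γ t` is
subtracted from `f`, while the right-hand side becomes `(g b - g a) / 2` for
`g t = f t - γ t`, which is monotone because `g' ≥ 0`. For a monotone `g` the estimate is
elementary: on `[a, x]` and `[x, b]` the integral of `g` is squeezed between the values of `g`
at the endpoints, and `g a ≤ g x ≤ g b`. -/

noncomputable def ostrowskiDeviation (f : ℝ → ℝ) (a b x : ℝ) : ℝ :=
  f x - (x - (a + b) / 2) * ((f b - f a) / (b - a)) - (1 / (b - a)) * ∫ t in a..b, f t

theorem ostrowskiDeviation_sub_mul {f : ℝ → ℝ} {a b : ℝ} (hf : IntervalIntegrable f volume a b)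
    (hab : a ≠ b) (c x : ℝ) :
    ostrowskiDeviation (fun t ↦ f t - c * t) a b x = ostrowskiDeviation f a b x := by
  have hba : b - a ≠ 0 := sub_ne_zero.2 hab.symm
  simp only [ostrowskiDeviation]
  rw [integral_sub hf (intervalIntegrable_id.const_mul c),
    intervalIntegral.integral_const_mul, integral_id]
  field_simp
  ring

theorem monotoneOn_sub_mul_of_hasDerivAt_of_le {f f' : ℝ → ℝ} {D : Set ℝ} {γ : ℝ}
    (hD : Convex ℝ D) (hderiv : ∀ t ∈ D, HasDerivAt f (f' t) t) (hγ : ∀ t ∈ D, γ ≤ f' t) :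
    MonotoneOn (fun t ↦ f t - γ * t) D :=
  monotoneOn_of_hasDerivWithinAt_nonneg hD
    (fun t ht ↦ ((hderiv t ht).continuousAt.sub (continuousAt_id.const_mul γ)).continuousWithinAt)
    (fun t ht ↦ ((hderiv t (interior_subset ht)).sub
      ((hasDerivAt_id t).const_mul γ)).hasDerivWithinAt.congr_deriv (by simp))
    (fun t ht ↦ sub_nonneg.2 (hγ t (interior_subset ht)))

section Monotone

variable {g : ℝ → ℝ} {a b : ℝ}

theorem MonotoneOn.mul_le_intervalIntegral (hg : MonotoneOn g (Icc a b)) (hab : a ≤ b) :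
    (b - a) * g a ≤ ∫ t in a..b, g t := by
  have hint : IntervalIntegrable g volume a b := (uIcc_of_le hab ▸ hg).intervalIntegrable
  simpa [mul_comm] using integral_mono_on hab intervalIntegrable_const hint
    fun t ht ↦ hg (left_mem_Icc.2 hab) ht ht.1

theorem MonotoneOn.intervalIntegral_le_mul (hg : MonotoneOn g (Icc a b)) (hab : a ≤ b) :
    ∫ t in a..b, g t ≤ (b - a) * g b := by
  have hint : IntervalIntegrable g volume a b := (uIcc_of_le hab ▸ hg).intervalIntegrable
  simpa [mul_comm] using integral_mono_on hab hint intervalIntegrable_const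
    fun t ht ↦ hg ht (right_mem_Icc.2 hab) ht.2

theorem MonotoneOn.abs_ostrowskiDeviation_le (hg : MonotoneOn g (Icc a b)) (hab : a < b)
    {x : ℝ} (hx : x ∈ Icc a b) :
    |ostrowskiDeviation g a b x| ≤ (g b - g a) / 2 := by
  obtain ⟨hax, hxb⟩ := hx
  have hba : 0 < b - a := sub_pos.2 hab
  have hleft : MonotoneOn g (Icc a x) := hg.mono (Icc_subset_Icc le_rfl hxb)
  have hright : MonotoneOn g (Icc x b) := hg.mono (Icc_subset_Icc hax le_rfl)
  have hsplit : ∫ t in a..b, g t = (∫ t in a..x, g t) + ∫ t in x..b, g t :=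
    (integral_add_adjacent_intervals (uIcc_of_le hax ▸ hleft).intervalIntegrable
      (uIcc_of_le hxb ▸ hright).intervalIntegrable).symm
  have hgx_lo : g a ≤ g x := hg (left_mem_Icc.2 hab.le) ⟨hax, hxb⟩ hax
  have hgx_hi : g x ≤ g b := hg ⟨hax, hxb⟩ (right_mem_Icc.2 hab.le) hxb
  have hdev : ostrowskiDeviation g a b x =
      ((b - a) * g x - (x - (a + b) / 2) * (g b - g a) - ((∫ t in a..x, g t) + ∫ t in x..b, g t))
        / (b - a) := by
    unfold ostrowskiDeviation
    rw [hsplit]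
    field_simp
  rw [hdev, abs_le, le_div_iff₀ hba, div_le_iff₀ hba]
  constructor
  · linarith [hleft.intervalIntegral_le_mul hax, hright.intervalIntegral_le_mul hxb,
      mul_le_mul_of_nonneg_left hgx_lo (sub_nonneg.2 hxb)]
  · linarith [hleft.mul_le_intervalIntegral hax, hright.mul_le_intervalIntegral hxb,
      mul_le_mul_of_nonneg_left hgx_hi (sub_nonneg.2 hax)]

end Monotone

theorem ujevic_lower_general (a b γ : ℝ) (hab : a < b) (f f' : ℝ → ℝ)
    (hderiv : ∀ t ∈ Icc a b, HasDerivAt f (f' t) t)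
    (hγ : ∀ t ∈ Icc a b, γ ≤ f' t) :
    ∀ x ∈ Icc a b,
      |f x - (x - (a + b) / 2) * ((f b - f a) / (b - a)) -
          (1 / (b - a)) * ∫ t in a..b, f t| ≤
        ((b - a) / 2) * ((f b - f a) / (b - a) - γ) := by
  intro x hx
  have hmono := monotoneOn_sub_mul_of_hasDerivAt_of_le (convex_Icc a b) hderiv hγ
  have hf : IntervalIntegrable f volume a b :=
    ContinuousOn.intervalIntegrable fun t ht ↦
      (hderiv t (uIcc_of_le hab.le ▸ ht)).continuousAt.continuousWithinAt
  have key := hmono.abs_ostrowskiDeviation_le hab hx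
  rw [ostrowskiDeviation_sub_mul hf hab.ne] at key
  refine key.trans_eq ?_
  field_simp [(sub_pos.2 hab).ne']
  ring

theorem ujevic_lower (a b γ Γ : ℝ) (hab : a < b) (f f' : ℝ → ℝ)
    (hderiv : ∀ t ∈ Icc a b, HasDerivAt f (f' t) t)
    (hγ : ∀ t ∈ Icc a b, γ ≤ f' t) (hΓ : ∀ t ∈ Icc a b, f' t ≤ Γ) :
    ∀ x ∈ Icc a b,
      |f x - (x - (a + b) / 2) * ((f b - f a) / (b - a)) -
          (1 / (b - a)) * ∫ t in a..b, f t| ≤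
        ((b - a) / 2) * ((f b - f a) / (b - a) - γ) :=
  ujevic_lower_general a b γ hab f f' hderiv hγ
end

section
/- Let f : [a,b] → ℝ be twice continuously differentiable with f'' ∈ L²[a,b]. Then for every x ∈ [a,b], |f(x) - (x - (a+b)/2)·(f(b)-f(a))/(b-a) - (1/(b-a)) ∫_a^b f(t) dt| ≤ (b-a)^(3/2)/(2π√3) · ‖f''‖_{L²[a,b]}. -/
/-!
The error functional `(b - a) f(x) - (x - (a + b)/2) (f b - f a) - ∫ f` vanishes on affine `f`, so
two integrations by parts on `[a, x]` and `[x, b]` write it as `-∫ K f''` for a piecewise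
quadratic Peano kernel `K` vanishing at `a` and `b`. Cauchy–Schwarz bounds `|∫ K f''|` by
`‖K‖₂ ‖f''‖₂`, and `‖K‖₂² = (b - a)⁵/120 - (x - a)(b - x)((x - a)³ + (b - x)³)/12 ≤ (b - a)⁵/120`.
Since `12π² < 120`, this is at most the square of `(b - a)^(5/2) / (2π√3)`.
-/

open intervalIntegral Set Real
open MeasureTheory (volume)

section IntegrationByParts

variable {α β : ℝ} {u u' u'' f f' f'' : ℝ → ℝ}

theorem integral_mul_deriv_deriv_eq
    (hu : ∀ t ∈ uIcc α β, HasDerivAt u (u' t) t) (hu' : ∀ t ∈ uIcc α β, HasDerivAt u' (u'' t) t)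
    (hf : ∀ t ∈ uIcc α β, HasDerivAt f (f' t) t) (hf' : ∀ t ∈ uIcc α β, HasDerivAt f' (f'' t) t)
    (hu'' : IntervalIntegrable u'' volume α β)
    (hf'' : IntervalIntegrable f'' volume α β) :
    ∫ t in α..β, u t * f'' t =
      u β * f' β - u α * f' α - (u' β * f β - u' α * f α) + ∫ t in α..β, u'' t * f t := by
  rw [integral_mul_deriv_eq_deriv_mul hu hf' (HasDerivAt.continuousOn hu').intervalIntegrable hf'',
    integral_mul_deriv_eq_deriv_mul hu' hf hu'' (HasDerivAt.continuousOn hf').intervalIntegrable]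
  ring

theorem integral_quadratic_mul_deriv_deriv (c r : ℝ)
    (hf : ∀ t ∈ uIcc α β, HasDerivAt f (f' t) t) (hf' : ∀ t ∈ uIcc α β, HasDerivAt f' (f'' t) t)
    (hf'' : IntervalIntegrable f'' volume α β) :
    ∫ t in α..β, ((t - c) ^ 2 - r) / 2 * f'' t =
      ((β - c) ^ 2 - r) / 2 * f' β - ((α - c) ^ 2 - r) / 2 * f' α
        - ((β - c) * f β - (α - c) * f α) + ∫ t in α..β, f t := by
  have hq : ∀ t, HasDerivAt (fun s => ((s - c) ^ 2 - r) / 2) (t - c) t := fun t => by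
    simpa using (((hasDerivAt_id t).sub_const c).pow 2).sub_const r |>.div_const 2
  have hq' : ∀ t, HasDerivAt (fun s => s - c) 1 t := fun t => (hasDerivAt_id t).sub_const c
  simpa using integral_mul_deriv_deriv_eq (fun t _ => hq t) (fun t _ => hq' t) hf hf'
    intervalIntegrable_const hf''

end IntegrationByParts

theorem integral_quadratic_sq (α β c r : ℝ) :
    ∫ t in α..β, (((t - c) ^ 2 - r) / 2) ^ 2 =
      ((β - c) ^ 5 / 5 - 2 * r * (β - c) ^ 3 / 3 + r ^ 2 * (β - c)) / 4
        - ((α - c) ^ 5 / 5 - 2 * r * (α - c) ^ 3 / 3 + r ^ 2 * (α - c)) / 4 := by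
  have hF : ∀ t, HasDerivAt
      (fun s => ((s - c) ^ 5 / 5 - 2 * r * (s - c) ^ 3 / 3 + r ^ 2 * (s - c)) / 4)
      ((((t - c) ^ 2 - r) / 2) ^ 2) t := fun t => by
    have h := ((hasDerivAt_id t).sub_const c)
    exact ((((h.pow 5).div_const 5).sub (((h.pow 3).const_mul (2 * r)).div_const 3)).add
      (h.const_mul (r ^ 2))).div_const 4 |>.congr_deriv (by simp only [id_eq]; push_cast; ring)
  exact integral_eq_sub_of_hasDerivAt (fun t _ => hF t)
    ((by fun_prop : Continuous _).intervalIntegrable α β)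

theorem sq_integral_mul_le_integral_sq_mul_integral_sq {a b : ℝ} (hab : a ≤ b) {g h : ℝ → ℝ}
    (hg : IntervalIntegrable (fun t => g t ^ 2) volume a b)
    (hh : IntervalIntegrable (fun t => h t ^ 2) volume a b)
    (hgh : IntervalIntegrable (fun t => g t * h t) volume a b) :
    (∫ t in a..b, g t * h t) ^ 2 ≤ (∫ t in a..b, g t ^ 2) * ∫ t in a..b, h t ^ 2 := by
  have hquad : ∀ s : ℝ, 0 ≤ (∫ t in a..b, g t ^ 2) * (s * s) + (-2 * ∫ t in a..b, g t * h t) * s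
      + ∫ t in a..b, h t ^ 2 := fun s => by
    have hexp : ∫ t in a..b, (s * g t - h t) ^ 2 = (∫ t in a..b, g t ^ 2) * (s * s)
        + (-2 * ∫ t in a..b, g t * h t) * s + ∫ t in a..b, h t ^ 2 := by
      have : (fun t => (s * g t - h t) ^ 2)
          = fun t => (s * s) * g t ^ 2 - (2 * s) * (g t * h t) + h t ^ 2 := by
        funext t; ring
      rw [this, integral_add ((hg.const_mul _).sub (hgh.const_mul _)) hh,
        integral_sub (hg.const_mul _) (hgh.const_mul _), integral_const_mul, integral_const_mul]
      ring
    exact hexp ▸ integral_nonneg hab fun t _ => sq_nonneg _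
  have := discrim_le_zero hquad
  rw [discrim] at this
  nlinarith

/-- Centred form of `(t - a) (t + b - 2x) / 2` for `t ≤ x` and `(t - b) (t + a - 2x) / 2` for
`x < t`. -/
noncomputable def ostrowskiKernel (a b x t : ℝ) : ℝ :=
  if t ≤ x then ((t - (x - (b - a) / 2)) ^ 2 - (x - (a + b) / 2) ^ 2) / 2
  else ((t - (x + (b - a) / 2)) ^ 2 - (x - (a + b) / 2) ^ 2) / 2

theorem continuous_ostrowskiKernel (a b x : ℝ) : Continuous (ostrowskiKernel a b x) :=
  Continuous.if_le (by fun_prop) (by fun_prop) continuous_id continuous_const fun t ht => by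
    subst ht; ring

section OstrowskiKernel

variable {a b x : ℝ}

theorem integral_ostrowskiKernel_split (hx : x ∈ Icc a b) {φ : ℝ → ℝ → ℝ}
    (hφ : IntervalIntegrable (fun t => φ (ostrowskiKernel a b x t) t) volume a b) :
    ∫ t in a..b, φ (ostrowskiKernel a b x t) t =
      (∫ t in a..x, φ (((t - (x - (b - a) / 2)) ^ 2 - (x - (a + b) / 2) ^ 2) / 2) t)
        + ∫ t in x..b, φ (((t - (x + (b - a) / 2)) ^ 2 - (x - (a + b) / 2) ^ 2) / 2) t := by
  have hx' : x ∈ uIcc a b := Icc_subset_uIcc hx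
  rw [← integral_add_adjacent_intervals (hφ.mono_set (uIcc_subset_uIcc_left hx'))
    (hφ.mono_set (uIcc_subset_uIcc_right hx'))]
  congr 1
  · refine integral_congr fun t ht => ?_
    rw [ostrowskiKernel, if_pos (uIcc_of_le hx.1 ▸ ht).2]
  · refine integral_congr_ae (MeasureTheory.ae_of_all _ fun t ht => ?_)
    rw [ostrowskiKernel, if_neg (not_le.mpr (uIoc_of_le hx.2 ▸ ht).1)]

theorem integral_ostrowskiKernel_mul (hx : x ∈ Icc a b) {f f' f'' : ℝ → ℝ}
    (hf : ∀ t ∈ Icc a b, HasDerivAt f (f' t) t) (hf' : ∀ t ∈ Icc a b, HasDerivAt f' (f'' t) t)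
    (hf'' : ContinuousOn f'' (Icc a b)) :
    ∫ t in a..b, ostrowskiKernel a b x t * f'' t =
      (x - (a + b) / 2) * (f b - f a) - (b - a) * f x + ∫ t in a..b, f t := by
  have hab : uIcc a b ⊆ Icc a b := (uIcc_of_le (hx.1.trans hx.2)).subset
  have hax : uIcc a x ⊆ Icc a b := (uIcc_subset_uIcc_left (Icc_subset_uIcc hx)).trans hab
  have hxb : uIcc x b ⊆ Icc a b := (uIcc_subset_uIcc_right (Icc_subset_uIcc hx)).trans hab
  rw [integral_ostrowskiKernel_split hx (φ := fun k t => k * f'' t)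
      (((continuous_ostrowskiKernel a b x).continuousOn.mul (hf''.mono hab)).intervalIntegrable),
    integral_quadratic_mul_deriv_deriv _ _ (fun t ht => hf t (hax ht)) (fun t ht => hf' t (hax ht))
      ((hf''.mono hax).intervalIntegrable),
    integral_quadratic_mul_deriv_deriv _ _ (fun t ht => hf t (hxb ht)) (fun t ht => hf' t (hxb ht))
      ((hf''.mono hxb).intervalIntegrable),
    ← integral_add_adjacent_intervals
      (HasDerivAt.continuousOn fun t ht => hf t (hax ht)).intervalIntegrable
      (HasDerivAt.continuousOn fun t ht => hf t (hxb ht)).intervalIntegrable]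
  ring

theorem integral_ostrowskiKernel_sq (hx : x ∈ Icc a b) :
    ∫ t in a..b, ostrowskiKernel a b x t ^ 2 =
      (b - a) ^ 5 / 120 - (x - a) * (b - x) * ((x - a) ^ 3 + (b - x) ^ 3) / 12 := by
  rw [integral_ostrowskiKernel_split hx (φ := fun k _ => k ^ 2)
      (((continuous_ostrowskiKernel a b x).pow 2).intervalIntegrable a b),
    integral_quadratic_sq, integral_quadratic_sq]
  ring

theorem integral_ostrowskiKernel_sq_le (hx : x ∈ Icc a b) :
    ∫ t in a..b, ostrowskiKernel a b x t ^ 2 ≤ (b - a) ^ 5 / 120 := by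
  have hxa : 0 ≤ x - a := sub_nonneg.mpr hx.1
  have hbx : 0 ≤ b - x := sub_nonneg.mpr hx.2
  rw [integral_ostrowskiKernel_sq hx]
  linarith [show 0 ≤ (x - a) * (b - x) * ((x - a) ^ 3 + (b - x) ^ 3) / 12 by positivity]

end OstrowskiKernel

theorem sqrt_div_120_le_mul_rpow {s : ℝ} (hs : 0 ≤ s) :
    √(s ^ 5 / 120) ≤ s * (s ^ ((3 : ℝ) / 2) / (2 * π * √3)) := by
  have hpow : (s ^ ((3 : ℝ) / 2)) ^ 2 = s ^ 3 := by
    rw [← rpow_natCast, ← rpow_mul hs]; norm_num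
  have hpi : 12 * π ^ 2 ≤ 120 := by nlinarith [pi_lt_d2, pi_pos]
  rw [sqrt_le_iff]
  refine ⟨by positivity, ?_⟩
  rw [mul_pow, div_pow, hpow, mul_pow, mul_pow, sq_sqrt zero_le_three,
    show s ^ 2 * (s ^ 3 / (2 ^ 2 * π ^ 2 * 3)) = s ^ 5 / (12 * π ^ 2) by ring]
  gcongr

theorem ujevic_L2 (a b : ℝ) (hab : a < b) (f f' f'' : ℝ → ℝ)
    (hderiv : ∀ t ∈ Icc a b, HasDerivAt f (f' t) t)
    (hderiv' : ∀ t ∈ Icc a b, HasDerivAt f' (f'' t) t)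
    (hcont : ContinuousOn f'' (Icc a b)) :
    ∀ x ∈ Icc a b,
      |f x - (x - (a + b) / 2) * ((f b - f a) / (b - a)) -
          (1 / (b - a)) * ∫ t in a..b, f t| ≤
        (b - a) ^ ((3 : ℝ) / 2) / (2 * π * Real.sqrt 3) *
          (∫ t in a..b, (f'' t) ^ 2) ^ ((1 : ℝ) / 2) := by
  intro x hx
  have hba : 0 < b - a := sub_pos.mpr hab
  have hK := (continuous_ostrowskiKernel a b x).continuousOn (s := uIcc a b)
  have hf'' : ContinuousOn f'' (uIcc a b) := hcont.mono (uIcc_of_le hab.le).subset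
  have herror : f x - (x - (a + b) / 2) * ((f b - f a) / (b - a))
      - (1 / (b - a)) * ∫ t in a..b, f t
      = -(∫ t in a..b, ostrowskiKernel a b x t * f'' t) / (b - a) := by
    rw [integral_ostrowskiKernel_mul hx hderiv hderiv' hcont]
    field_simp
    ring
  have hKsq : √(∫ t in a..b, ostrowskiKernel a b x t ^ 2)
      ≤ (b - a) * ((b - a) ^ ((3 : ℝ) / 2) / (2 * π * √3)) :=
    (sqrt_le_sqrt (integral_ostrowskiKernel_sq_le hx)).trans (sqrt_div_120_le_mul_rpow hba.le)
  rw [herror, abs_div, abs_neg, abs_of_pos hba, div_le_iff₀ hba, ← sqrt_eq_rpow]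
  calc |∫ t in a..b, ostrowskiKernel a b x t * f'' t|
      ≤ √(∫ t in a..b, ostrowskiKernel a b x t ^ 2) * √(∫ t in a..b, f'' t ^ 2) := by
        rw [← sqrt_mul (integral_nonneg hab.le fun t _ => sq_nonneg _)]
        exact abs_le_sqrt (sq_integral_mul_le_integral_sq_mul_integral_sq hab.le
          (hK.pow 2).intervalIntegrable (hf''.pow 2).intervalIntegrable
          (hK.mul hf'').intervalIntegrable)
    _ ≤ (b - a) * ((b - a) ^ ((3 : ℝ) / 2) / (2 * π * √3)) * √(∫ t in a..b, f'' t ^ 2) := by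
        gcongr
    _ = _ := by ring
end
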